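/- If M is an (n,0)-SG-projective module which is not projective and Q is any module with pd(Q) ≤ m, then M ⊕ Q is an (n,m)-SG-projective module; moreover if pd(M) = ∞ then pd(M ⊕ Q) = ∞. -/

import Mathlib

/- Formalization preliminaries: exact sequences of modules, projective/flat/Gorenstein
projective dimensions, (n,m)-strongly Gorenstein projective modules. -/

open CategoryTheory

universe u

variable (R : Type u) [Ring R]

/-- `IsExactSeq d n` says that the finite complex
`0 → X (n+1) → X n → ⋯ → X 1 → X 0 → 0` (with maps `d i : X (i+1) ⟶ X i` for `i ≤ n`)
is exact everywhere: `d n` is injective, `d 0` is surjective, and it is exact at the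
interior terms. -/
def IsExactSeq {X : ℕ → ModuleCat.{u} R} (d : ∀ i, X (i + 1) ⟶ X i) (n : ℕ) : Prop :=
  Function.Injective (d n) ∧ Function.Surjective (d 0) ∧
    ∀ i < n, Function.Exact (d (i + 1)) (d i)

/-- The finite exact sequence `0 → X (n+1) → ⋯ → X 0 → 0` remains exact after applying
`Hom(-, Q)` for every projective module `Q`. -/
def IsHomProjExactSeq {X : ℕ → ModuleCat.{u} R} (d : ∀ i, X (i + 1) ⟶ X i) (n : ℕ) : Prop :=
  ∀ Q : ModuleCat.{u} R, Projective Q →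
    Function.Injective (fun g : X 0 ⟶ Q => d 0 ≫ g) ∧
    Function.Surjective (fun g : X n ⟶ Q => d n ≫ g) ∧
    ∀ i < n, Function.Exact (fun g : X i ⟶ Q => d i ≫ g)
      (fun g : X (i + 1) ⟶ Q => d (i + 1) ≫ g)

/-- `M` has projective dimension at most `m`: there is an exact sequence
`0 → P_m → ⋯ → P_0 → M → 0` with all `P_i` projective. -/
def HasPdLE (M : ModuleCat.{u} R) (m : ℕ) : Prop :=
  ∃ (X : ℕ → ModuleCat.{u} R) (d : ∀ i, X (i + 1) ⟶ X i),
    Nonempty (X 0 ≅ M) ∧ (∀ i, 1 ≤ i → i ≤ m + 1 → Projective (X i)) ∧ IsExactSeq R d m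

/-- `M` is a flat module, expressed via the equational criterion of flatness
(valid over any associative ring): whenever `∑ aᵢ • xᵢ = 0` with `aᵢ ∈ R`, `xᵢ ∈ M`,
there are `yⱼ ∈ M` and `bᵢⱼ ∈ R` with `xᵢ = ∑ⱼ bᵢⱼ • yⱼ` and `∑ᵢ aᵢ * bᵢⱼ = 0`. -/
def IsFlatModule (M : ModuleCat.{u} R) : Prop :=
  ∀ (k : ℕ) (a : Fin k → R) (x : Fin k → M), (∑ i, a i • x i) = 0 →
    ∃ (l : ℕ) (b : Fin k → Fin l → R) (y : Fin l → M),
      (∀ i, x i = ∑ j, b i j • y j) ∧ ∀ j, (∑ i, a i * b i j) = 0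

/-- `M` has flat dimension at most `m`: there is an exact sequence
`0 → F_m → ⋯ → F_0 → M → 0` with all `F_i` flat. -/
def HasFdLE (M : ModuleCat.{u} R) (m : ℕ) : Prop :=
  ∃ (X : ℕ → ModuleCat.{u} R) (d : ∀ i, X (i + 1) ⟶ X i),
    Nonempty (X 0 ≅ M) ∧ (∀ i, 1 ≤ i → i ≤ m + 1 → IsFlatModule R (X i)) ∧ IsExactSeq R d m

/-- A complete projective resolution of `M`: an exact sequence of projective modules
`⋯ → P 1 → P 0 → P (-1) → ⋯` which stays exact after applying `Hom(-, Q)` for every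
projective `Q`, together with an isomorphism `M ≅ Im (P 0 → P (-1))`. -/
structure CompleteProjRes (M : ModuleCat.{u} R) where
  P : ℤ → ModuleCat.{u} R
  d : ∀ i : ℤ, P (i + 1) ⟶ P i
  projective : ∀ i, Projective (P i)
  exact : ∀ i, Function.Exact (d (i + 1)) (d i)
  homExact : ∀ Q : ModuleCat.{u} R, Projective Q → ∀ i,
    Function.Exact (fun g : P i ⟶ Q => d i ≫ g) (fun g : P (i + 1) ⟶ Q => d (i + 1) ≫ g)
  iso : Nonempty (M ≅ ModuleCat.of R (LinearMap.range (d (-1)).hom))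

/-- `M` is Gorenstein projective if it admits a complete projective resolution. -/
def IsGProjective (M : ModuleCat.{u} R) : Prop := Nonempty (CompleteProjRes R M)

/-- `M` has Gorenstein projective dimension at most `k`: there is an exact sequence
`0 → G_k → ⋯ → G_0 → M → 0` with all `G_i` Gorenstein projective. -/
def HasGpdLE (M : ModuleCat.{u} R) (k : ℕ) : Prop :=
  ∃ (X : ℕ → ModuleCat.{u} R) (d : ∀ i, X (i + 1) ⟶ X i),
    Nonempty (X 0 ≅ M) ∧ (∀ i, 1 ≤ i → i ≤ k + 1 → IsGProjective R (X i)) ∧ IsExactSeq R d k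

/-- `Gpd M = k`. -/
def HasGpdEq (M : ModuleCat.{u} R) (k : ℕ) : Prop :=
  HasGpdLE R M k ∧ ∀ j < k, ¬ HasGpdLE R M j

/-- `M` is `n`-strongly Gorenstein projective: there is an exact sequence
`0 → M → P_n → ⋯ → P_1 → M → 0` with all `P_i` projective which remains exact under
`Hom(-, Q)` for every projective `Q`. -/
def IsNSGProjective (n : ℕ) (M : ModuleCat.{u} R) : Prop :=
  ∃ (X : ℕ → ModuleCat.{u} R) (d : ∀ i, X (i + 1) ⟶ X i),
    Nonempty (X 0 ≅ M) ∧ Nonempty (X (n + 1) ≅ M) ∧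
    (∀ i, 1 ≤ i → i ≤ n → Projective (X i)) ∧
    IsExactSeq R d n ∧ IsHomProjExactSeq R d n

/-- The `Ext` group `Ext^i(M, N)` (as a `ℤ`-module). -/
noncomputable def extGroup (i : ℕ) (M N : ModuleCat.{u} R) : ModuleCat ℤ :=
  ((Ext ℤ (ModuleCat.{u} R) i).obj (Opposite.op M)).obj N

/-- `M` is `(n, m)`-strongly Gorenstein projective: there is an exact sequence
`0 → M → Q_n → ⋯ → Q_1 → M → 0` with `pd (Q_i) ≤ m` for all `i`, and
`Ext^i(M, Q) = 0` for every `i > m` and every projective `Q`. -/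
def IsSGProjective (n m : ℕ) (M : ModuleCat.{u} R) : Prop :=
  (∃ (X : ℕ → ModuleCat.{u} R) (d : ∀ i, X (i + 1) ⟶ X i),
    Nonempty (X 0 ≅ M) ∧ Nonempty (X (n + 1) ≅ M) ∧
    (∀ i, 1 ≤ i → i ≤ n → HasPdLE R (X i) m) ∧ IsExactSeq R d n) ∧
  ∀ i, m < i → ∀ Q : ModuleCat.{u} R, Projective Q → Subsingleton (extGroup R i M Q)

/-- A projective resolution `⋯ → P 1 → P 0 → M → 0` of `M`. -/
structure ProjRes (M : ModuleCat.{u} R) where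
  P : ℕ → ModuleCat.{u} R
  d : ∀ i : ℕ, P (i + 1) ⟶ P i
  π : P 0 ⟶ M
  projective : ∀ i, Projective (P i)
  surj : Function.Surjective π
  exact₀ : Function.Exact (d 0) π
  exact : ∀ i, Function.Exact (d (i + 1)) (d i)

/-- `K` is an `i`-th syzygy of `M` (for `i ≥ 1`): `K ≅ Im (P i → P (i-1))` in some
projective resolution of `M`. -/
def IsSyzygy (M : ModuleCat.{u} R) (i : ℕ) (K : ModuleCat.{u} R) : Prop :=
  ∃ res : ProjRes R M, Nonempty (K ≅ ModuleCat.of R (LinearMap.range (res.d (i - 1)).hom))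

/-!
Add to the given sequence `0 → M → P_n → ⋯ → P_1 → M → 0` (all `P_i` projective) the exact
sequence `0 → Q → Q² → ⋯ → Q² → Q → 0` whose differentials are `(a, b) ↦ (b, 0)`, except the top
one, which is the inclusion of the first factor; the middle terms `P_i ⊕ Q²` have projective
dimension at most `m`. For `i > m ≥ 0`, `Ext^i(M ⊕ Q, P)` vanishes because `Ext^i(M, P)` does and
`Ext^i(Q, -)` vanishes above `pd Q`. Conversely, if `pd (M ⊕ Q) ≤ p` then `Ext^{p+1}(M ⊕ Q, -) = 0`,
hence `Ext^{p+1}(M, -) = 0` as `M` is a direct summand, and this forces `pd M ≤ p`.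

Ext is computed on explicit projective resolutions: `Ext^{i+1}(A, Y) = 0` iff every cocycle
`P_{i+1} → Y` is a coboundary. Splicing a resolution of `K = ker (F ↠ A)`, `F` projective, onto
`F` gives the dimension shift `Ext^{i+2}(A, -) = 0 ↔ Ext^{i+1}(K, -) = 0`.
-/

/-- The exact-sequence half of `IsSGProjective`. -/
def HasSGSeq (n m : ℕ) (M : ModuleCat.{u} R) : Prop :=
  ∃ (X : ℕ → ModuleCat.{u} R) (d : ∀ i, X (i + 1) ⟶ X i),
    Nonempty (X 0 ≅ M) ∧ Nonempty (X (n + 1) ≅ M) ∧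
    (∀ i, 1 ≤ i → i ≤ n → HasPdLE R (X i) m) ∧ IsExactSeq R d n

theorem Function.Exact.prodMap {M₁ M₂ M₃ N₁ N₂ N₃ : Type*} [Zero M₃] [Zero N₃]
    {f : M₁ → M₂} {g : M₂ → M₃} {f' : N₁ → N₂} {g' : N₂ → N₃}
    (h : Function.Exact f g) (h' : Function.Exact f' g') :
    Function.Exact (Prod.map f f') (Prod.map g g') := by
  rintro ⟨y, y'⟩
  simp only [Prod.map_apply, Prod.mk_eq_zero, h y, h' y', Set.range_prodMap, Set.mem_prod]

section

variable {R}

theorem IsExactSeq.prod {X Y : ℕ → ModuleCat.{u} R} {d : ∀ i, X (i + 1) ⟶ X i}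
    {d' : ∀ i, Y (i + 1) ⟶ Y i} {n : ℕ} (h : IsExactSeq R d n) (h' : IsExactSeq R d' n) :
    IsExactSeq R (X := fun j => ModuleCat.of R (X j × Y j))
      (fun j => ModuleCat.ofHom ((d j).hom.prodMap (d' j).hom)) n :=
  ⟨h.1.prodMap h'.1, h.2.1.prodMap h'.2.1, fun i hi => (h.2.2 i hi).prodMap (h'.2.2 i hi)⟩

theorem HasPdLE.of_iso {A B : ModuleCat.{u} R} (e : A ≅ B) {m : ℕ} (h : HasPdLE R A m) :
    HasPdLE R B m :=
  let ⟨X, d, ⟨e₀⟩, hX, hd⟩ := h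
  ⟨X, d, ⟨e₀ ≪≫ e⟩, hX, hd⟩

theorem HasPdLE.prod {A B : ModuleCat.{u} R} {m : ℕ} (hA : HasPdLE R A m)
    (hB : HasPdLE R B m) : HasPdLE R (ModuleCat.of R (A × B)) m := by
  obtain ⟨X, d, ⟨eX⟩, hX, hd⟩ := hA
  obtain ⟨Y, d', ⟨eY⟩, hY, hd'⟩ := hB
  refine ⟨_, _, ⟨(eX.toLinearEquiv.prodCongr eY.toLinearEquiv).toModuleIso⟩, fun i h₁ h₂ => ?_,
    hd.prod hd'⟩
  have := hX i h₁ h₂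
  have := hY i h₁ h₂
  infer_instance

theorem hasPdLE_zero_iff {A : ModuleCat.{u} R} : HasPdLE R A 0 ↔ Projective A := by
  constructor
  · rintro ⟨X, d, ⟨e⟩, hX, hinj, hsurj, -⟩
    have := hX 1 le_rfl le_rfl
    exact Projective.of_iso ((LinearEquiv.ofBijective (d 0).hom ⟨hinj, hsurj⟩).toModuleIso ≪≫ e)
      inferInstance
  · intro hA
    exact ⟨fun _ => A, fun _ => 𝟙 A, ⟨Iso.refl A⟩, fun _ _ _ => hA,
      Function.injective_id, Function.surjective_id, fun _ h => absurd h (Nat.not_lt_zero _)⟩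

theorem hasPdLE_succ_of_ker {F A : ModuleCat.{u} R} [Projective F] (π : F ⟶ A)
    (hπ : Function.Surjective π) {k : ℕ}
    (hK : HasPdLE R (ModuleCat.of R (LinearMap.ker π.hom)) k) : HasPdLE R A (k + 1) := by
  obtain ⟨X, d, ⟨e⟩, hX, hinj, hsurj, hexact⟩ := hK
  let ι : X 0 ⟶ F := e.hom ≫ ModuleCat.ofHom (LinearMap.ker π.hom).subtype
  have hι : Function.Injective ι :=
    Subtype.val_injective.comp (ConcreteCategory.bijective_of_isIso e.hom).1
  have hιπ : Function.Exact ι π := by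
    change Function.Exact ((LinearMap.ker π.hom).subtype ∘ₗ e.hom.hom) π.hom
    exact (Function.Surjective.comp_exact_iff_exact
      (ConcreteCategory.bijective_of_isIso e.hom).2).mpr (LinearMap.exact_subtype_ker_map _)
  refine ⟨fun | 0 => A | 1 => F | j + 2 => X (j + 1),
    fun | 0 => π | 1 => d 0 ≫ ι | j + 2 => d (j + 1), ⟨Iso.refl A⟩, ?_, ?_, hπ, ?_⟩
  · rintro (_ | _ | j) h₁ h₂
    exacts [absurd h₁ (by omega), inferInstance, hX (j + 1) (by omega) (by omega)]
  · cases k with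
    | zero => exact hι.comp hinj
    | succ k => exact hinj
  · rintro (_ | _ | i) hi
    · exact (Function.Surjective.comp_exact_iff_exact (f := ι.hom) hsurj).mpr hιπ
    · exact (Function.Injective.comp_exact_iff_exact (i := ι.hom) hι).mpr (hexact 0 (by omega))
    · exact hexact (i + 1) (by omega)

theorem HasPdLE.exists_ker {A : ModuleCat.{u} R} {k : ℕ} (h : HasPdLE R A (k + 1)) :
    ∃ (F : ModuleCat.{u} R) (π : F ⟶ A), Projective F ∧ Function.Surjective π ∧
      HasPdLE R (ModuleCat.of R (LinearMap.ker π.hom)) k := by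
  obtain ⟨X, d, ⟨e⟩, hX, hinj, hsurj, hexact⟩ := h
  have he := ConcreteCategory.bijective_of_isIso e.hom
  have hker : LinearMap.ker (d 0 ≫ e.hom).hom = LinearMap.range (d 1).hom := by
    rw [ModuleCat.hom_comp, LinearMap.ker_comp_of_ker_eq_bot _ (LinearMap.ker_eq_bot.mpr he.1)]
    exact (hexact 0 (by omega)).linearMap_ker_eq
  have hmem (x : X 2) : d 1 x ∈ LinearMap.ker (d 0 ≫ e.hom).hom :=
    hker ▸ LinearMap.mem_range_self _ x
  refine ⟨X 1, d 0 ≫ e.hom, hX 1 le_rfl (by omega), he.2.comp hsurj,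
    fun | 0 => ModuleCat.of R (LinearMap.ker (d 0 ≫ e.hom).hom) | j + 1 => X (j + 2),
    fun | 0 => ModuleCat.ofHom ((d 1).hom.codRestrict _ hmem) | j + 1 => d (j + 2),
    ⟨Iso.refl _⟩, fun | j + 1, _, h₂ => hX (j + 2) (by omega) (by omega), ?_, ?_, ?_⟩
  · cases k with
    | zero => exact fun x y hxy => hinj (congrArg Subtype.val hxy)
    | succ k => exact hinj
  · rintro ⟨y, hy⟩
    obtain ⟨x, rfl⟩ := hker ▸ hy
    exact ⟨x, rfl⟩
  · rintro (_ | i) hi y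
    · exact Subtype.ext_iff.trans (hexact 1 (by omega) y)
    · exact hexact (i + 2) (by omega) y

theorem hasPdLE_of_projective (A : ModuleCat.{u} R) [Projective A] (m : ℕ) : HasPdLE R A m := by
  induction m generalizing A with
  | zero => exact hasPdLE_zero_iff.mpr inferInstance
  | succ m ih =>
    have : Subsingleton (LinearMap.ker (𝟙 A : A ⟶ A).hom) := by
      rw [ModuleCat.hom_id, LinearMap.ker_id]
      infer_instance
    have : Projective (ModuleCat.of R (LinearMap.ker (𝟙 A : A ⟶ A).hom)) :=
      (ModuleCat.isZero_of_subsingleton _).projective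
    exact hasPdLE_succ_of_ker (𝟙 A) Function.surjective_id (ih _)

theorem HasPdLE.mono {A : ModuleCat.{u} R} {k m : ℕ} (h : HasPdLE R A k) (hkm : k ≤ m) :
    HasPdLE R A m := by
  induction k generalizing A m with
  | zero =>
    have := hasPdLE_zero_iff.mp h
    exact hasPdLE_of_projective A m
  | succ k ih =>
    obtain ⟨F, π, hF, hπ, hK⟩ := h.exists_ker
    obtain ⟨m, rfl⟩ := Nat.exists_eq_add_of_le' (Nat.one_le_of_lt hkm)
    exact hasPdLE_succ_of_ker π hπ (ih hK (by omega))

/- The complex `0 → Q → Q × Q → ⋯ → Q × Q → Q → 0`, with `Q × Q` in degrees `1, …, n`, realised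
by submodules of `Q × Q` so that all its terms share one ambient module: the end terms are `Q × 0`,
and the differential out of degree `j + 1` is `(a, b) ↦ (b, 0)`, except for `j = n` where it is the
identity. -/

namespace ShiftComplex

variable (Q : ModuleCat.{u} R) (n : ℕ)

def term (j : ℕ) : Submodule R (Q × Q) :=
  if 1 ≤ j ∧ j ≤ n then ⊤ else LinearMap.ker (LinearMap.snd R Q Q)

def map (j : ℕ) : Q × Q →ₗ[R] Q × Q :=
  if j = n then LinearMap.id else LinearMap.inl R Q Q ∘ₗ LinearMap.snd R Q Q

variable {Q n}

theorem term_eq_top {j : ℕ} (h₁ : 1 ≤ j) (h₂ : j ≤ n) : term Q n j = ⊤ := if_pos ⟨h₁, h₂⟩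

theorem mem_term_iff {j : ℕ} (h : ¬(1 ≤ j ∧ j ≤ n)) {x : Q × Q} : x ∈ term Q n j ↔ x.2 = 0 := by
  rw [term, if_neg h]
  rfl

theorem ker_snd_le_term (j : ℕ) : LinearMap.ker (LinearMap.snd R Q Q) ≤ term Q n j := by
  unfold term
  split_ifs <;> simp

theorem map_self (x : Q × Q) : map Q n n x = x := by simp [map]

theorem map_of_ne {j : ℕ} (h : j ≠ n) (x : Q × Q) : map Q n j x = (x.2, 0) := by simp [map, h]

theorem map_snd {j : ℕ} {x : Q × Q} (hx : x ∈ term Q n (j + 1)) : (map Q n j x).2 = 0 := by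
  by_cases h : j = n
  · subst h
    rwa [map_self, ← mem_term_iff (n := j) (j := j + 1) (by omega)]
  · rw [map_of_ne h]

variable (Q n)

def restrictMap (j : ℕ) : term Q n (j + 1) →ₗ[R] term Q n j :=
  (map Q n j).restrict fun _ hx => ker_snd_le_term j (map_snd hx)

variable {Q n}

theorem restrictMap_injective : Function.Injective (restrictMap Q n n) := fun x y h =>
  Subtype.ext (by simpa [restrictMap, map_self] using congrArg Subtype.val h)

theorem restrictMap_surjective : Function.Surjective (restrictMap Q n 0) := by
  rintro ⟨y, hy⟩
  rw [mem_term_iff (by omega)] at hy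
  by_cases hn : n = 0
  · subst hn
    exact ⟨⟨y, (mem_term_iff (by omega)).mpr hy⟩, Subtype.ext (map_self (n := 0) y)⟩
  · refine ⟨⟨(0, y.1), by simp [term_eq_top le_rfl (Nat.one_le_iff_ne_zero.mpr hn)]⟩,
      Subtype.ext ?_⟩
    simp [restrictMap, map_of_ne (Ne.symm hn), Prod.ext_iff, hy]

theorem restrictMap_exact {i : ℕ} (hi : i < n) :
    Function.Exact (restrictMap Q n (i + 1)) (restrictMap Q n i) := by
  rintro ⟨y, hy⟩
  have hd : restrictMap Q n i ⟨y, hy⟩ = 0 ↔ y.2 = 0 := by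
    simp [restrictMap, Subtype.ext_iff, map_of_ne (Nat.ne_of_lt hi), Prod.ext_iff]
  rw [hd]
  constructor
  · intro hy2
    by_cases h : i + 1 = n
    · subst h
      exact ⟨⟨y, (mem_term_iff (by omega)).mpr hy2⟩, Subtype.ext (map_self (n := i + 1) y)⟩
    · refine ⟨⟨(0, y.1), by simp [term_eq_top (n := n) (j := i + 2) (by omega) (by omega)]⟩,
        Subtype.ext ?_⟩
      simp [restrictMap, map_of_ne h, Prod.ext_iff, hy2]
  · rintro ⟨x, hx⟩
    have hxy : map Q n (i + 1) x = y := congrArg Subtype.val hx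
    exact hxy ▸ map_snd x.2

theorem isExactSeq :
    IsExactSeq R (X := fun j => ModuleCat.of R (term Q n j))
      (fun j => ModuleCat.ofHom (restrictMap Q n j)) n :=
  ⟨restrictMap_injective, restrictMap_surjective, fun _ => restrictMap_exact⟩

def endTermEquiv {j : ℕ} (h : ¬(1 ≤ j ∧ j ≤ n)) : term Q n j ≃ₗ[R] Q where
  toFun x := (x : Q × Q).1
  invFun q := ⟨(q, 0), (mem_term_iff h).mpr rfl⟩
  map_add' _ _ := rfl
  map_smul' _ _ := rfl
  left_inv x := Subtype.ext (Prod.ext rfl ((mem_term_iff h).mp x.2).symm)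
  right_inv _ := rfl

end ShiftComplex

theorem HasSGSeq.mono {n k m : ℕ} {M : ModuleCat.{u} R} (h : HasSGSeq R n k M) (hkm : k ≤ m) :
    HasSGSeq R n m M :=
  let ⟨X, d, e₀, e, hX, hd⟩ := h
  ⟨X, d, e₀, e, fun i h₁ h₂ => (hX i h₁ h₂).mono hkm, hd⟩

theorem HasSGSeq.prod {n m : ℕ} {M Q : ModuleCat.{u} R} (hM : HasSGSeq R n m M)
    (hQ : HasPdLE R Q m) : HasSGSeq R n m (ModuleCat.of R (M × Q)) := by
  obtain ⟨X, d, ⟨e₀⟩, ⟨e⟩, hX, hd⟩ := hM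
  refine ⟨_, _, ⟨?_⟩, ⟨?_⟩, fun i h₁ h₂ => ?_, hd.prod (ShiftComplex.isExactSeq (Q := Q))⟩
  · exact (e₀.toLinearEquiv.prodCongr (ShiftComplex.endTermEquiv (by omega))).toModuleIso
  · exact (e.toLinearEquiv.prodCongr (ShiftComplex.endTermEquiv (by omega))).toModuleIso
  · refine ((hX i h₁ h₂).prod (hQ.prod hQ)).of_iso
      (LinearEquiv.prodCongr (LinearEquiv.refl _ _) ?_).toModuleIso
    exact ((LinearEquiv.ofEq _ _ (ShiftComplex.term_eq_top h₁ h₂)).trans Submodule.topEquiv).symm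

namespace ProjRes

def augment {F A : ModuleCat.{u} R} [Projective F] (π : F ⟶ A) (hπ : Function.Surjective π)
    (res : ProjRes R (ModuleCat.of R (LinearMap.ker π.hom))) : ProjRes R A where
  P | 0 => F | j + 1 => res.P j
  d | 0 => res.π ≫ ModuleCat.ofHom (LinearMap.ker π.hom).subtype | j + 1 => res.d j
  π := π
  projective | 0 => inferInstance | j + 1 => res.projective j
  surj := hπ
  exact₀ := (Function.Surjective.comp_exact_iff_exact (f := (LinearMap.ker π.hom).subtype)
    res.surj).mpr (LinearMap.exact_subtype_ker_map _)
  exact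
    | 0 => (Function.Injective.comp_exact_iff_exact (i := (LinearMap.ker π.hom).subtype)
        Subtype.val_injective).mpr res.exact₀
    | j + 1 => res.exact j

def prod {A B : ModuleCat.{u} R} (rA : ProjRes R A) (rB : ProjRes R B) :
    ProjRes R (ModuleCat.of R (A × B)) where
  P j := ModuleCat.of R (rA.P j × rB.P j)
  d j := ModuleCat.ofHom ((rA.d j).hom.prodMap (rB.d j).hom)
  π := ModuleCat.ofHom (rA.π.hom.prodMap rB.π.hom)
  projective j := by
    have := rA.projective j
    have := rB.projective j
    infer_instance
  surj := rA.surj.prodMap rB.surj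
  exact₀ := rA.exact₀.prodMap rB.exact₀
  exact j := (rA.exact j).prodMap (rB.exact j)

def ofProjectiveResolution {A : ModuleCat.{u} R} (P : ProjectiveResolution A) : ProjRes R A where
  P := P.complex.X
  d j := P.complex.d (j + 1) j
  π := P.π.f 0
  projective := P.projective
  surj := (ModuleCat.epi_iff_surjective (P.π.f 0)).mp inferInstance
  exact₀ := (ShortComplex.ShortExact.moduleCat_exact_iff_function_exact _).mp P.exact₀
  exact j := (ShortComplex.ShortExact.moduleCat_exact_iff_function_exact _).mp (P.exact_succ j)

instance (A : ModuleCat.{u} R) : Nonempty (ProjRes R A) :=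
  ⟨ofProjectiveResolution (ProjectiveResolution.of A)⟩

variable {A : ModuleCat.{u} R} (res : ProjRes R A)

noncomputable def complex : ChainComplex (ModuleCat.{u} R) ℕ :=
  ChainComplex.of res.P res.d fun n =>
    ModuleCat.hom_ext (LinearMap.ext (res.exact n).apply_apply_eq_zero)

theorem complex_d (j : ℕ) : res.complex.d (j + 1) j = res.d j := ChainComplex.of_d _ _ j

theorem d_comp_π : res.d 0 ≫ res.π = 0 :=
  ModuleCat.hom_ext (LinearMap.ext res.exact₀.apply_apply_eq_zero)

noncomputable def toProjectiveResolution : ProjectiveResolution A where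
  complex := res.complex
  projective := res.projective
  π := (ChainComplex.toSingle₀Equiv _ _).symm ⟨res.π, by rw [complex_d]; exact res.d_comp_π⟩
  quasiIso := ⟨fun n => by
    cases n with
    | zero =>
      rw [ChainComplex.quasiIsoAt₀_iff, ShortComplex.quasiIso_iff_of_zeros']
      · refine (ShortComplex.exact_and_epi_g_iff_of_iso
          (S₂ := ShortComplex.mk (res.d 0) res.π res.d_comp_π) ?_).2
          ⟨ModuleCat.shortComplex_exact _ res.exact₀, (ModuleCat.epi_iff_surjective _).mpr res.surj⟩
        refine ShortComplex.isoMk (Iso.refl _) (Iso.refl _) (Iso.refl _) ?_ ?_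
        · simp [complex_d]
          rfl
        · simp
          rfl
      all_goals rfl
    | succ n =>
      rw [quasiIsoAt_iff_exactAt' _ _ (ChainComplex.exactAt_succ_single_obj _ _),
        HomologicalComplex.exactAt_iff' _ (n + 2) (n + 1) n (by simp) (by simp)]
      have hf : (res.complex.sc' (n + 2) (n + 1) n).f = res.d (n + 1) := res.complex_d (n + 1)
      have hg : (res.complex.sc' (n + 2) (n + 1) n).g = res.d n := res.complex_d n
      refine ModuleCat.shortComplex_exact _ ?_
      rw [hf, hg]
      exact res.exact n⟩

theorem extGroup_succ_subsingleton_iff (i : ℕ) (Y : ModuleCat.{u} R) :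
    Subsingleton (extGroup R (i + 1) A Y) ↔
      ∀ g : res.P (i + 1) ⟶ Y, res.d (i + 1) ≫ g = 0 → ∃ h : res.P i ⟶ Y, res.d i ≫ h = g := by
  let e := res.toProjectiveResolution.isoExt (R := ℤ) (i + 1) Y
  rw [extGroup, ← ModuleCat.isZero_iff_subsingleton, e.isZero_iff,
    ← HomologicalComplex.exactAt_iff_isZero_homology,
    HomologicalComplex.exactAt_iff' _ i (i + 1) (i + 2) (by simp) (by simp),
    ShortComplex.moduleCat_exact_iff]
  change (∀ g : res.P (i + 1) ⟶ Y, res.complex.d (i + 2) (i + 1) ≫ g = 0 →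
    ∃ h : res.P i ⟶ Y, res.complex.d (i + 1) i ≫ h = g) ↔ _
  simp only [complex_d]
  rfl

end ProjRes

theorem extGroup_succ_succ_subsingleton_iff {F A : ModuleCat.{u} R} [Projective F] (π : F ⟶ A)
    (hπ : Function.Surjective π) (i : ℕ) (Y : ModuleCat.{u} R) :
    Subsingleton (extGroup R (i + 2) A Y) ↔
      Subsingleton (extGroup R (i + 1) (ModuleCat.of R (LinearMap.ker π.hom)) Y) := by
  obtain ⟨res⟩ : Nonempty (ProjRes R (ModuleCat.of R (LinearMap.ker π.hom))) := inferInstance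
  exact ((res.augment π hπ).extGroup_succ_subsingleton_iff (i + 1) Y).trans
    (res.extGroup_succ_subsingleton_iff i Y).symm

theorem HasPdLE.extGroup_subsingleton {A : ModuleCat.{u} R} {m : ℕ} (h : HasPdLE R A m) {i : ℕ}
    (hi : m < i) (Y : ModuleCat.{u} R) : Subsingleton (extGroup R i A Y) := by
  induction m generalizing A i with
  | zero =>
    have := hasPdLE_zero_iff.mp h
    obtain ⟨j, rfl⟩ : ∃ j, i = j + 1 := ⟨i - 1, by omega⟩
    exact ModuleCat.subsingleton_of_isZero (isZero_Ext_succ_of_projective A Y j)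
  | succ m ih =>
    obtain ⟨F, π, hF, hπ, hK⟩ := h.exists_ker
    obtain ⟨j, rfl⟩ : ∃ j, i = j + 2 := ⟨i - 2, by omega⟩
    exact (extGroup_succ_succ_subsingleton_iff π hπ j Y).mpr (ih hK (by omega))

theorem projective_of_extGroup_one_subsingleton {A : ModuleCat.{u} R}
    (h : ∀ Y, Subsingleton (extGroup R 1 A Y)) : Projective A := by
  let π := Projective.π A
  have hπ : Function.Surjective π := (ModuleCat.epi_iff_surjective π).mp inferInstance
  let K := ModuleCat.of R (LinearMap.ker π.hom)
  obtain ⟨res⟩ : Nonempty (ProjRes R K) := inferInstance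
  obtain ⟨r, hr⟩ := ((res.augment π hπ).extGroup_succ_subsingleton_iff 0 K).mp (h K) res.π
    res.d_comp_π
  -- `Ext¹(A, K) = 0` splits `K ↪ Projective.over A ↠ A`, so `A` is a direct summand.
  have hret : r.hom ∘ₗ (LinearMap.ker π.hom).subtype = LinearMap.id := by
    refine LinearMap.ext fun z => ?_
    obtain ⟨x, rfl⟩ := res.surj z
    exact ConcreteCategory.congr_hom hr x
  obtain ⟨e, -, he⟩ :=
    (LinearMap.exact_subtype_ker_map π.hom).splitInjectiveEquiv hπ ⟨r.hom, hret⟩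
  have hs : π.hom ∘ₗ (e.symm.toLinearMap ∘ₗ LinearMap.inr R _ _) = LinearMap.id :=
    LinearMap.ext fun a => by simpa using LinearMap.congr_fun he (e.symm (0, a))
  have : Module.Projective R A := Module.Projective.of_split _ π.hom hs
  infer_instance

theorem hasPdLE_of_extGroup_subsingleton {A : ModuleCat.{u} R} {p : ℕ}
    (h : ∀ Y, Subsingleton (extGroup R (p + 1) A Y)) : HasPdLE R A p := by
  induction p generalizing A with
  | zero => exact hasPdLE_zero_iff.mpr (projective_of_extGroup_one_subsingleton h)
  | succ p ih =>
    have hπ : Function.Surjective (Projective.π A) :=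
      (ModuleCat.epi_iff_surjective _).mp inferInstance
    exact hasPdLE_succ_of_ker _ hπ
      (ih fun Y => (extGroup_succ_succ_subsingleton_iff _ hπ p Y).mp (h Y))

theorem extGroup_subsingleton_of_prod {A B Y : ModuleCat.{u} R} {i : ℕ}
    (h : Subsingleton (extGroup R i (ModuleCat.of R (A × B)) Y)) :
    Subsingleton (extGroup R i A Y) := by
  let r : Retract A (ModuleCat.of R (A × B)) :=
    ⟨ModuleCat.ofHom (LinearMap.inl R A B), ModuleCat.ofHom (LinearMap.fst R A B), rfl⟩
  let s := r.op.map ((Ext ℤ _ i).flip.obj Y)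
  rw [← ModuleCat.isZero_iff_subsingleton] at h ⊢
  exact (Limits.IsZero.iff_id_eq_zero _).mpr
    (s.retract.symm.trans (by rw [h.eq_of_src s.r 0]; exact Limits.comp_zero))

theorem extGroup_prod_subsingleton {A B Y : ModuleCat.{u} R} {i : ℕ}
    (hA : Subsingleton (extGroup R (i + 1) A Y)) (hB : Subsingleton (extGroup R (i + 1) B Y)) :
    Subsingleton (extGroup R (i + 1) (ModuleCat.of R (A × B)) Y) := by
  obtain ⟨rA⟩ : Nonempty (ProjRes R A) := inferInstance
  obtain ⟨rB⟩ : Nonempty (ProjRes R B) := inferInstance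
  rw [rA.extGroup_succ_subsingleton_iff] at hA
  rw [rB.extGroup_succ_subsingleton_iff] at hB
  refine ((rA.prod rB).extGroup_succ_subsingleton_iff i Y).mpr fun g hg => ?_
  have hgA (x : rA.P (i + 2)) : g.hom ((rA.d (i + 1)).hom x, 0) = 0 := by
    rw [← map_zero (rB.d (i + 1)).hom]
    exact ConcreteCategory.congr_hom hg (x, 0)
  have hgB (y : rB.P (i + 2)) : g.hom (0, (rB.d (i + 1)).hom y) = 0 := by
    rw [← map_zero (rA.d (i + 1)).hom]
    exact ConcreteCategory.congr_hom hg (0, y)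
  obtain ⟨kA, hkA⟩ := hA (ModuleCat.ofHom (g.hom ∘ₗ LinearMap.inl R _ _)) <| by
    ext x
    exact hgA x
  obtain ⟨kB, hkB⟩ := hB (ModuleCat.ofHom (g.hom ∘ₗ LinearMap.inr R _ _)) <| by
    ext y
    exact hgB y
  refine ⟨ModuleCat.ofHom (kA.hom.coprod kB.hom), ?_⟩
  ext ⟨x, y⟩
  have hx : kA.hom ((rA.d i).hom x) = g.hom (x, 0) := ConcreteCategory.congr_hom hkA x
  have hy : kB.hom ((rB.d i).hom y) = g.hom (0, y) := ConcreteCategory.congr_hom hkB y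
  change kA.hom ((rA.d i).hom x) + kB.hom ((rB.d i).hom y) = g.hom (x, y)
  rw [hx, hy]
  exact (map_add g.hom (x, 0) (0, y)).symm.trans
    (congrArg g.hom (Prod.ext (add_zero x) (zero_add y)))

end

theorem sum_sgProjective_general {R : Type u} [Ring R] (n m : ℕ)
    (M Q : ModuleCat.{u} R) (hM : IsSGProjective R n 0 M)
    (hQ : HasPdLE R Q m) :
    IsSGProjective R n m (ModuleCat.of R (M × Q)) ∧
      ((¬ ∃ p, HasPdLE R M p) → ¬ ∃ p, HasPdLE R (ModuleCat.of R (M × Q)) p) := by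
  obtain ⟨hseq, hext⟩ := hM
  refine ⟨⟨(HasSGSeq.mono (M := M) hseq m.zero_le).prod hQ, fun i hi P hP => ?_⟩, ?_⟩
  · obtain ⟨j, rfl⟩ : ∃ j, i = j + 1 := ⟨i - 1, by omega⟩
    exact extGroup_prod_subsingleton (hext _ j.succ_pos P hP) (hQ.extGroup_subsingleton hi P)
  · rintro hMinf ⟨p, hp⟩
    exact hMinf ⟨p, hasPdLE_of_extGroup_subsingleton fun Y =>
      extGroup_subsingleton_of_prod (hp.extGroup_subsingleton p.lt_succ_self Y)⟩

/-- if `M` is `(n,0)`-SG-projective and not projective and `pd Q ≤ m`, then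
`M ⊕ Q` is `(n,m)`-SG-projective; moreover if `pd M = ∞` then `pd (M ⊕ Q) = ∞`. -/
theorem sum_sgProjective {R : Type u} [Ring R] (n m : ℕ) (hn : 1 ≤ n)
    (M Q : ModuleCat.{u} R) (hM : IsSGProjective R n 0 M) (hMnp : ¬ Projective M)
    (hQ : HasPdLE R Q m) :
    IsSGProjective R n m (ModuleCat.of R (M × Q)) ∧
      ((¬ ∃ p, HasPdLE R M p) → ¬ ∃ p, HasPdLE R (ModuleCat.of R (M × Q)) p) :=
  sum_sgProjective_general n m M Q hM hQ
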